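/- Fix k ≥ 2, r ≥ 1, p_i ≥ r for each i ∈ [k], p = Σ_{i=1}^k p_i, and λ ∈ (0,1). Let U_{(i)} ∈ R^{p_i×r} have orthonormal columns, and let Σ ∈ R^{p×p} be the block matrix whose i-th diagonal block is I_{p_i} and whose (i,j)-th block (i ≠ j) is λ U_{(i)} U_{(j)}^T. Let U = [U_{(1)}^T, ..., U_{(k)}^T]^T ∈ R^{p×r}. Then Σ U = (1 + (k−1)λ) U, and the eigenvalues of Σ are: 1 + (k−1)λ with multiplicity r (with eigenspace equal to the column span of U), 1 − λ with multiplicity (k−1)r, and 1 with multiplicity p − kr. -/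

import Mathlib

open MeasureTheory ProbabilityTheory Matrix Real
open scoped Classical

noncomputable section

/-- Frobenius norm of a real matrix. -/
def frob {m n : ℕ} (M : Matrix (Fin m) (Fin n) ℝ) : ℝ :=
  Real.sqrt (∑ i, ∑ j, (M i j) ^ 2)

/-- Distance between `p × r` matrices modulo right multiplication by an orthogonal matrix:
`dist(U,V) = min_{P ∈ O(r)} ‖U P - V‖_F`. -/
def gdist {p r : ℕ} (U V : Matrix (Fin p) (Fin r) ℝ) : ℝ :=
  sInf {x : ℝ | ∃ P : Matrix (Fin r) (Fin r) ℝ, Pᵀ * P = 1 ∧ x = frob (U * P - V)}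

/-- The positive semidefinite square root, as `Matrix.PosSemidef.sqrt` was defined in the older
Mathlib (removed since). -/
def Matrix.PosSemidef.sqrt {n : Type*} [Fintype n] [DecidableEq n]
    {A : Matrix n n ℝ} (hA : A.PosSemidef) : Matrix n n ℝ :=
  hA.1.eigenvectorUnitary.1 * diagonal ((↑) ∘ Real.sqrt ∘ hA.1.eigenvalues) *
  (star hA.1.eigenvectorUnitary : Matrix n n ℝ)

/-- Centered multivariate Gaussian with covariance `S`, as the law of `S^{1/2} z` for a
standard Gaussian vector `z`. -/
def mvGaussian {m : ℕ} (S : Matrix (Fin m) (Fin m) ℝ) : Measure (Fin m → ℝ) :=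
  if h : S.PosSemidef then
    (Measure.pi fun _ : Fin m => gaussianReal 0 1).map fun z => h.sqrt.mulVec z
  else 0

/-- Law of `n` i.i.d. samples from `N_m(0, S)`. -/
def iidLaw (n : ℕ) {m : ℕ} (S : Matrix (Fin m) (Fin m) ℝ) : Measure (Fin n → Fin m → ℝ) :=
  Measure.pi fun _ : Fin n => mvGaussian S

def sampleMean {n m : ℕ} (X : Fin n → Fin m → ℝ) (i : Fin m) : ℝ := (∑ t, X t i) / n

/-- Sample covariance matrix. -/
def sampleCov {n m : ℕ} (X : Fin n → Fin m → ℝ) : Matrix (Fin m) (Fin m) ℝ :=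
  Matrix.of fun i j => (∑ t, (X t i - sampleMean X i) * (X t j - sampleMean X j)) / n

/-- Block-diagonal part of a matrix with respect to block labels `β`. -/
def blockPart {m k : ℕ} (β : Fin m → Fin k) (M : Matrix (Fin m) (Fin m) ℝ) :
    Matrix (Fin m) (Fin m) ℝ :=
  Matrix.of fun i j => if β i = β j then M i j else 0

/-- Rows of `M` belonging to block `i`, all other rows zeroed out. -/
def restrictRows {m k c : ℕ} (β : Fin m → Fin k) (i : Fin k) (M : Matrix (Fin m) (Fin c) ℝ) :
    Matrix (Fin m) (Fin c) ℝ :=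
  Matrix.of fun a b => if β a = i then M a b else 0

/-- ℓ₂ norm of row `i` of `M`. -/
def rowNorm {m r : ℕ} (M : Matrix (Fin m) (Fin r) ℝ) (i : Fin m) : ℝ :=
  Real.sqrt (∑ j, (M i j) ^ 2)

/-- Set of indices of nonzero rows. -/
def rowSupport {m r : ℕ} (M : Matrix (Fin m) (Fin r) ℝ) : Set (Fin m) := {i | M i ≠ 0}

/-- `W'` is the hard thresholding of `W` keeping the `k` rows of largest ℓ₂ norm
(ties broken toward smaller indices). -/
def IsHT {m r : ℕ} (W : Matrix (Fin m) (Fin r) ℝ) (k : ℕ) (W' : Matrix (Fin m) (Fin r) ℝ) : Prop :=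
  ∃ C : Finset (Fin m), C.card = min k m ∧ (∀ i ∈ C, W' i = W i) ∧ (∀ i ∉ C, W' i = 0) ∧
    ∀ i ∈ C, ∀ j ∉ C, rowNorm W j < rowNorm W i ∨ (rowNorm W j = rowNorm W i ∧ i < j)

/-- Positive semidefinite square root (junk value `0` if not psd). -/
def psqrt {r : ℕ} (M : Matrix (Fin r) (Fin r) ℝ) : Matrix (Fin r) (Fin r) ℝ :=
  if h : M.PosSemidef then h.sqrt else 0

/-- Inverse square root. -/
def invSqrt {r : ℕ} (M : Matrix (Fin r) (Fin r) ℝ) : Matrix (Fin r) (Fin r) ℝ := (psqrt M)⁻¹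

/-- Nuclear norm `Tr √(Mᵀ M)`. -/
def nucNorm {a b : ℕ} (M : Matrix (Fin a) (Fin b) ℝ) : ℝ := (psqrt (Mᵀ * M)).trace

/-- Entrywise ℓ₁ norm. -/
def l1Norm {a b : ℕ} (M : Matrix (Fin a) (Fin b) ℝ) : ℝ := ∑ i, ∑ j, |M i j|

/-- Entrywise sup norm. -/
def maxAbs {a b : ℕ} (M : Matrix (Fin a) (Fin b) ℝ) : ℝ := sSup {x : ℝ | ∃ i j, x = |M i j|}

/-- Membership in the Fantope `{X : 0 ⪯ X ⪯ I, Tr X = r}`. -/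
def InFantope {p : ℕ} (r : ℕ) (X : Matrix (Fin p) (Fin p) ℝ) : Prop :=
  X.PosSemidef ∧ (1 - X).PosSemidef ∧ X.trace = (r : ℝ)

/-- `F` minimizes `-⟨Sh, ·⟩ + ρ ‖·‖_1` over symmetric matrices whose conjugation by
`S0h^{1/2}` lies in the Fantope. -/
def IsFantopeMin {p : ℕ} (r : ℕ) (Sh S0h : Matrix (Fin p) (Fin p) ℝ) (ρ : ℝ)
    (F : Matrix (Fin p) (Fin p) ℝ) : Prop :=
  F.IsSymm ∧ InFantope r (psqrt S0h * F * psqrt S0h) ∧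
    ∀ G : Matrix (Fin p) (Fin p) ℝ, G.IsSymm → InFantope r (psqrt S0h * G * psqrt S0h) →
      -(Shᵀ * F).trace + ρ * l1Norm F ≤ -(Shᵀ * G).trace + ρ * l1Norm G

/-- `L` maximizes `⟨Sh, L Lᵀ⟩` subject to `Lᵀ S0h L = I_r` and row support inside `I`. -/
def IsRestrictedMax {p r : ℕ} (Sh S0h : Matrix (Fin p) (Fin p) ℝ) (I : Finset (Fin p))
    (L : Matrix (Fin p) (Fin r) ℝ) : Prop :=
  Lᵀ * S0h * L = 1 ∧ (∀ i ∉ I, L i = 0) ∧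
    ∀ L' : Matrix (Fin p) (Fin r) ℝ, L'ᵀ * S0h * L' = 1 → (∀ i ∉ I, L' i = 0) →
      (Shᵀ * (L' * L'ᵀ)).trace ≤ (Shᵀ * (L * Lᵀ)).trace

/-- Kullback–Leibler divergence `∫ log (dP/dQ) dP`. -/
def klDivR {α : Type*} [MeasurableSpace α] (P Q : Measure α) : ℝ :=
  ∫ x, Real.log (P.rnDeriv Q x).toReal ∂P

/-! Write `V i` for the `i`-th block of `U` (rows outside block `i` set to zero),
`Φ x = (V iᵀ x)ᵢ` and `Ψ c = ∑ᵢ V i cᵢ`. Orthonormality of the blocks gives `Φ Ψ = 1`, and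
`S = 1 + λ Ψ J Φ` with `J = (𝟙𝟙ᵀ - I) ⊗ I_r` acting on `k`-tuples in `ℝʳ`. For such a perturbation
the eigenspace of `1 + λν`, `ν ≠ 0`, is the image under `Ψ` of the `ν`-eigenspace of `J`, and the
eigenspace of `1` is `ker Φ` as soon as `J` is injective. Now `J` acts by `k - 1` on constant tuples
(which `Ψ` maps onto the column span of `U`), by `-1` on tuples summing to zero, and is injective
for `k ≠ 1`; the multiplicities `r`, `(k - 1) r` and `p - k r` follow by counting dimensions. -/

open Module Module.End LinearMap

section Perturbation

variable {K E F : Type*} [Field K] [AddCommGroup E] [Module K E] [AddCommGroup F] [Module K F]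
  {Φ : E →ₗ[K] F} {Ψ : F →ₗ[K] E} (A : End K F) {t : K}

theorem mem_eigenspace_one_add_smul_comp_iff (ht : t ≠ 0) (ν : K) (x : E) :
    x ∈ eigenspace (1 + t • (Ψ ∘ₗ A ∘ₗ Φ)) (1 + t * ν) ↔ Ψ (A (Φ x)) = ν • x := by
  rw [mem_eigenspace_iff, LinearMap.add_apply, End.one_apply, add_smul, one_smul, add_right_inj,
    mul_smul]
  exact smul_right_inj ht

theorem eigenspace_one_add_smul_comp (hΦΨ : Function.LeftInverse Φ Ψ) (ht : t ≠ 0) {ν : K}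
    (hν : ν ≠ 0) :
    eigenspace (1 + t • (Ψ ∘ₗ A ∘ₗ Φ)) (1 + t * ν) = (eigenspace A ν).map Ψ := by
  ext x
  rw [mem_eigenspace_one_add_smul_comp_iff A ht, Submodule.mem_map]
  constructor
  · intro hx
    -- `x = Ψ (ν⁻¹ • A (Φ x))` lies in the range of `Ψ`, hence is fixed by `Ψ ∘ Φ`.
    have hxΨ : Ψ (Φ x) = x := by
      rw [← inv_smul_smul₀ hν x, ← hx, ← map_smul, hΦΨ]
    refine ⟨Φ x, mem_eigenspace_iff.mpr ?_, hxΨ⟩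
    rw [← hΦΨ (A (Φ x)), hx, map_smul]
  · rintro ⟨c, hc, rfl⟩
    rw [hΦΨ, mem_eigenspace_iff.mp hc, map_smul]

theorem eigenspace_one_add_smul_comp_one (hΦΨ : Function.LeftInverse Φ Ψ) (ht : t ≠ 0)
    (hA : ker A = ⊥) : eigenspace (1 + t • (Ψ ∘ₗ A ∘ₗ Φ)) 1 = ker Φ := by
  ext x
  have hx := mem_eigenspace_one_add_smul_comp_iff (Φ := Φ) (Ψ := Ψ) A ht 0 x
  rw [mul_zero, add_zero, zero_smul] at hx
  rw [hx, mem_ker, ← map_zero Ψ, hΦΨ.injective.eq_iff, ← mem_ker, hA, Submodule.mem_bot]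

theorem finrank_ker_of_leftInverse [FiniteDimensional K E] (hΦΨ : Function.LeftInverse Φ Ψ) :
    finrank K (ker Φ) = finrank K E - finrank K F := by
  have hrank := finrank_range_add_finrank_ker Φ
  rw [range_eq_top.mpr hΦΨ.surjective, finrank_top] at hrank
  omega

end Perturbation

section SumOthers

variable (K ι M : Type*) [Field K] [Fintype ι] [AddCommGroup M] [Module K M]

/-- The operator `(𝟙𝟙ᵀ - I) ⊗ I` on `ι → M`. -/
def sumOthers : End K (ι → M) := LinearMap.const ∘ₗ (∑ i, LinearMap.proj i) - LinearMap.id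

variable {K ι M}

theorem mem_eigenspace_sumOthers_iff (ν : K) (c : ι → M) :
    c ∈ eigenspace (sumOthers K ι M) ν ↔ ∀ j, ∑ i, c i = (ν + 1) • c j := by
  simp [funext_iff, sumOthers, add_smul, sub_eq_iff_eq_add]

theorem eigenspace_sumOthers_neg_one [Nonempty ι] :
    eigenspace (sumOthers K ι M) (-1) = ker (∑ i, LinearMap.proj i : (ι → M) →ₗ[K] M) := by
  ext c
  rw [mem_eigenspace_sumOthers_iff]
  simp

variable [CharZero K]

theorem eigenspace_sumOthers_card_sub_one :
    eigenspace (sumOthers K ι M) ((Fintype.card ι : K) - 1) = range LinearMap.const := by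
  ext c
  rw [mem_eigenspace_sumOthers_iff, sub_add_cancel, mem_range]
  constructor
  · intro hc
    refine ⟨(Fintype.card ι : K)⁻¹ • ∑ i, c i, funext fun j => ?_⟩
    have hcard : (Fintype.card ι : K) ≠ 0 := by
      exact_mod_cast (Fintype.card_pos_iff.mpr ⟨j⟩).ne'
    rw [LinearMap.const_apply, Function.const_apply, hc j, inv_smul_smul₀ hcard]
  · rintro ⟨x, rfl⟩ j
    simp [Finset.sum_const, Nat.cast_smul_eq_nsmul]

theorem ker_sumOthers (hι : Fintype.card ι ≠ 1) : ker (sumOthers K ι M) = ⊥ := by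
  rw [← eigenspace_zero, eq_bot_iff]
  intro c hc
  rw [mem_eigenspace_sumOthers_iff, zero_add] at hc
  simp only [one_smul] at hc
  have hsum : (Fintype.card ι : K) • ∑ i, c i = ∑ i, c i := by
    rw [Nat.cast_smul_eq_nsmul, ← Finset.card_univ, ← Finset.sum_const]
    exact Finset.sum_congr rfl fun j _ => hc j
  have hn : (Fintype.card ι : K) - 1 ≠ 0 := sub_ne_zero.mpr (by exact_mod_cast hι)
  have hs : ∑ i, c i = 0 :=
    (smul_eq_zero.mp (by rw [sub_smul, one_smul, hsum, sub_self])).resolve_left hn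
  exact funext fun j => (hc j).symm.trans hs

end SumOthers

section Dimensions

variable {K ι M : Type*} [Field K] [Fintype ι] [Nonempty ι] [AddCommGroup M] [Module K M]
  [FiniteDimensional K M]

theorem finrank_ker_sum_proj :
    finrank K (ker (∑ i, LinearMap.proj i : (ι → M) →ₗ[K] M)) =
      (Fintype.card ι - 1) * finrank K M := by
  obtain ⟨j⟩ := ‹Nonempty ι›
  have hsingle : Function.LeftInverse (∑ i, LinearMap.proj i : (ι → M) →ₗ[K] M)
      (LinearMap.single K (fun _ => M) j) := fun x => by
    simp [Finset.sum_pi_single']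
  rw [finrank_ker_of_leftInverse hsingle, Module.finrank_pi_fintype, Finset.sum_const,
    Finset.card_univ, smul_eq_mul, Nat.sub_one_mul]

end Dimensions

theorem Matrix.mul_eq_smul_of_range_toLin'_le {R m n : Type*} [CommRing R] [Fintype m]
    [DecidableEq m] [Fintype n] [DecidableEq n] {S : Matrix m m R} {U : Matrix m n R} {μ : R}
    (h : range (toLin' U) ≤ eigenspace (toLin' S) μ) : S * U = μ • U := by
  apply Matrix.toLin'.injective
  rw [toLin'_mul, map_smul]
  exact LinearMap.ext fun c => mem_eigenspace_iff.mp (h (mem_range_self _ c))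

section Blocks

variable {K ι m n : Type*} [Field K] [Fintype ι] [Fintype n] [DecidableEq n]
  (V : ι → Matrix m n K)

def blockCoords [Fintype m] : (m → K) →ₗ[K] (ι → n → K) := LinearMap.pi fun i => toLin' (V i)ᵀ

def blockSum : (ι → n → K) →ₗ[K] (m → K) := ∑ i, toLin' (V i) ∘ₗ LinearMap.proj i

theorem leftInverse_blockCoords_blockSum [Fintype m] [DecidableEq ι]
    (hV : ∀ i j, (V i)ᵀ * V j = if i = j then 1 else 0) :
    Function.LeftInverse (blockCoords V) (blockSum V) := fun c => by
  funext j
  simp only [blockCoords, blockSum, coe_sum, coe_comp, coe_proj, Finset.sum_apply,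
    Function.comp_apply, Function.eval, toLin'_apply, pi_apply, map_sum, mulVec_mulVec, hV]
  rw [Finset.sum_eq_single j (fun i _ hij => by rw [if_neg hij.symm, Matrix.zero_mulVec])
    (by simp), if_pos rfl, Matrix.one_mulVec]

theorem blockSum_comp_const : blockSum V ∘ₗ LinearMap.const = toLin' (∑ i, V i) := by
  ext
  simp [blockSum]

theorem blockSum_comp_sumOthers_comp_blockCoords [Fintype m] [DecidableEq m] :
    blockSum V ∘ₗ sumOthers K ι (n → K) ∘ₗ blockCoords V =
      toLin' ((∑ i, V i) * (∑ i, V i)ᵀ - ∑ i, V i * (V i)ᵀ) := by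
  simp only [sumOthers, comp_sub, sub_comp, comp_id, ← comp_assoc, blockSum_comp_const]
  have hcoords : (∑ i, LinearMap.proj i) ∘ₗ blockCoords V = toLin' (∑ i, V i)ᵀ := by
    ext
    simp [blockCoords, Matrix.transpose_sum]
  have hproj : blockSum V ∘ₗ blockCoords V = toLin' (∑ i, V i * (V i)ᵀ) := by
    ext
    simp [blockCoords, blockSum]
  rw [comp_assoc, hcoords, hproj, ← toLin'_mul, ← map_sub]

end Blocks

section RestrictRows

variable {m k c : ℕ} (β : Fin m → Fin k)

theorem sum_restrictRows (M : Matrix (Fin m) (Fin c) ℝ) : ∑ i, restrictRows β i M = M := by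
  ext a b
  simp [restrictRows, Matrix.sum_apply]

theorem transpose_restrictRows_mul_restrictRows_of_ne {i j : Fin k} (hij : i ≠ j)
    (M N : Matrix (Fin m) (Fin c) ℝ) : (restrictRows β i M)ᵀ * restrictRows β j N = 0 := by
  ext a b
  rw [Matrix.mul_apply, Matrix.zero_apply]
  refine Finset.sum_eq_zero fun x _ => ?_
  by_cases hx : β x = i
  · simp [restrictRows, hx, hij]
  · simp [restrictRows, hx]

theorem sum_restrictRows_mul_transpose_restrictRows (M N : Matrix (Fin m) (Fin c) ℝ) :
    ∑ i, restrictRows β i M * (restrictRows β i N)ᵀ = blockPart β (M * Nᵀ) := by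
  ext a b
  by_cases hab : β a = β b <;>
    simp [restrictRows, blockPart, Matrix.sum_apply, Matrix.mul_apply, hab]

theorem leftInverse_blockCoords_blockSum_restrictRows (U : Matrix (Fin m) (Fin c) ℝ)
    (hU : ∀ i, (restrictRows β i U)ᵀ * restrictRows β i U = 1) :
    Function.LeftInverse (blockCoords (restrictRows β · U)) (blockSum (restrictRows β · U)) :=
  leftInverse_blockCoords_blockSum _ fun i j => by
    split_ifs with hij
    · exact hij ▸ hU i
    · exact transpose_restrictRows_mul_restrictRows_of_ne β hij U U

theorem blockSum_restrictRows_comp_const (U : Matrix (Fin m) (Fin c) ℝ) :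
    blockSum (restrictRows β · U) ∘ₗ LinearMap.const = toLin' U := by
  rw [blockSum_comp_const, sum_restrictRows]

theorem toLin'_injective_of_restrictRows [Nonempty (Fin k)] {U : Matrix (Fin m) (Fin c) ℝ}
    (hU : ∀ i, (restrictRows β i U)ᵀ * restrictRows β i U = 1) :
    Function.Injective (toLin' U) := by
  rw [← blockSum_restrictRows_comp_const β U, coe_comp]
  exact (leftInverse_blockCoords_blockSum_restrictRows β U hU).injective.comp
    Function.const_injective

theorem eq_one_add_smul_sub_blockPart {S M : Matrix (Fin m) (Fin m) ℝ} {t : ℝ}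
    (hS : ∀ a b, S a b = if β a = β b then (if a = b then 1 else 0) else t * M a b) :
    S = 1 + t • (M - blockPart β M) := by
  ext a b
  rw [hS]
  by_cases hab : β a = β b
  · simp [blockPart, hab, Matrix.one_apply]
  · simp [blockPart, hab, ne_of_apply_ne β hab]

theorem toLin'_one_add_smul_sub_blockPart (U : Matrix (Fin m) (Fin c) ℝ) (t : ℝ) :
    toLin' (1 + t • (U * Uᵀ - blockPart β (U * Uᵀ))) =
      1 + t • (blockSum (restrictRows β · U) ∘ₗ sumOthers ℝ (Fin k) (Fin c → ℝ) ∘ₗ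
        blockCoords (restrictRows β · U)) := by
  rw [blockSum_comp_sumOthers_comp_blockCoords, sum_restrictRows,
    sum_restrictRows_mul_transpose_restrictRows, map_add, map_smul, toLin'_one, ← one_eq_id]

end RestrictRows

theorem statement19_general
    (k r p : ℕ) (hk : 2 ≤ k)
    (lam : ℝ) (hlam0 : 0 < lam)
    (β : Fin p → Fin k)
    (U : Matrix (Fin p) (Fin r) ℝ)
    -- each block `U_{(i)}` has orthonormal columns
    (hUorth : ∀ i : Fin k, (restrictRows β i U)ᵀ * restrictRows β i U = 1)
    (S : Matrix (Fin p) (Fin p) ℝ)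
    (hSdef : ∀ a b : Fin p,
      S a b = if β a = β b then (if a = b then 1 else 0) else lam * (U * Uᵀ) a b) :
    S * U = (1 + ((k : ℝ) - 1) * lam) • U ∧
    Module.End.eigenspace (Matrix.toLin' S) (1 + ((k : ℝ) - 1) * lam) =
      Submodule.span ℝ (Set.range fun j : Fin r => Uᵀ j) ∧
    Module.finrank ℝ (Module.End.eigenspace (Matrix.toLin' S) (1 + ((k : ℝ) - 1) * lam)) = r ∧
    Module.finrank ℝ (Module.End.eigenspace (Matrix.toLin' S) (1 - lam)) = (k - 1) * r ∧
    Module.finrank ℝ (Module.End.eigenspace (Matrix.toLin' S) 1) = p - k * r := by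
  have : Nonempty (Fin k) := ⟨⟨0, by omega⟩⟩
  have hlam : lam ≠ 0 := hlam0.ne'
  have hk1 : (Fintype.card (Fin k) : ℝ) - 1 ≠ 0 := by
    rw [Fintype.card_fin, sub_ne_zero, Nat.cast_ne_one]
    omega
  have hΦΨ := leftInverse_blockCoords_blockSum_restrictRows β U hUorth
  have hS : toLin' S = 1 + lam • (blockSum (restrictRows β · U) ∘ₗ
      sumOthers ℝ (Fin k) (Fin r → ℝ) ∘ₗ blockCoords (restrictRows β · U)) := by
    rw [eq_one_add_smul_sub_blockPart β hSdef, toLin'_one_add_smul_sub_blockPart]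
  have hE : eigenspace (toLin' S) (1 + ((k : ℝ) - 1) * lam) = range (toLin' U) := by
    rw [hS, show ((k : ℝ) - 1) * lam = lam * ((Fintype.card (Fin k) : ℝ) - 1) by
        rw [Fintype.card_fin, mul_comm],
      eigenspace_one_add_smul_comp _ hΦΨ hlam hk1, eigenspace_sumOthers_card_sub_one,
      ← range_comp, blockSum_restrictRows_comp_const]
  refine ⟨?_, ?_, ?_, ?_, ?_⟩
  · exact Matrix.mul_eq_smul_of_range_toLin'_le hE.ge
  · rw [hE, range_toLin']
    rfl
  · rw [hE, finrank_range_of_inj (toLin'_injective_of_restrictRows β hUorth), finrank_fin_fun]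
  · rw [hS, sub_eq_add_neg, ← mul_neg_one, eigenspace_one_add_smul_comp _ hΦΨ hlam (by norm_num),
      eigenspace_sumOthers_neg_one,
      ← LinearEquiv.finrank_eq (Submodule.equivMapOfInjective _ hΦΨ.injective _),
      finrank_ker_sum_proj, Fintype.card_fin, finrank_fin_fun]
  · rw [hS, eigenspace_one_add_smul_comp_one _ hΦΨ hlam
      (ker_sumOthers (by rw [Fintype.card_fin]; omega)), finrank_ker_of_leftInverse hΦΨ]
    simp [Module.finrank_pi_fintype]

/-- eigenstructure of the lower-bound covariance construction. -/
theorem statement19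
    (k r p : ℕ) (hk : 2 ≤ k) (hr : 1 ≤ r)
    (p_ : Fin k → ℕ) (hpr : ∀ i, r ≤ p_ i) (hp : p = ∑ i, p_ i)
    (lam : ℝ) (hlam0 : 0 < lam) (hlam1 : lam < 1)
    (β : Fin p → Fin k) (hβ : ∀ i : Fin k, ({a : Fin p | β a = i}).ncard = p_ i)
    (U : Matrix (Fin p) (Fin r) ℝ)
    -- each block `U_{(i)}` has orthonormal columns
    (hUorth : ∀ i : Fin k, (restrictRows β i U)ᵀ * restrictRows β i U = 1)
    (S : Matrix (Fin p) (Fin p) ℝ)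
    (hSdef : ∀ a b : Fin p,
      S a b = if β a = β b then (if a = b then 1 else 0) else lam * (U * Uᵀ) a b) :
    S * U = (1 + ((k : ℝ) - 1) * lam) • U ∧
    Module.End.eigenspace (Matrix.toLin' S) (1 + ((k : ℝ) - 1) * lam) =
      Submodule.span ℝ (Set.range fun j : Fin r => Uᵀ j) ∧
    Module.finrank ℝ (Module.End.eigenspace (Matrix.toLin' S) (1 + ((k : ℝ) - 1) * lam)) = r ∧
    Module.finrank ℝ (Module.End.eigenspace (Matrix.toLin' S) (1 - lam)) = (k - 1) * r ∧
    Module.finrank ℝ (Module.End.eigenspace (Matrix.toLin' S) 1) = p - k * r :=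
  statement19_general k r p hk lam hlam0 β U hUorth S hSdef

end
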